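/- Let α, β, γ : {1,…,27} → ℝ be weights with Σᵢ αⁱ = Σᵢ βⁱ = Σᵢ γⁱ = 1 and βⁱ ≠ 0, γⁱ ≠ 0 for all i. For every point x ∈ ℝ¹³⁵ = (ℝ⁵)²⁷, there exist real numbers λ¹, …, λ²⁷, λ²⁸, λ²⁹ such that the Lagrange 1-form Σᵢ αⁱ dGᵢ + Σᵢ λⁱ ωᵢ + λ²⁸ Σᵢ βⁱ dEᵢ + λ²⁹ Σᵢ γⁱ dQᵢ vanishes at x (as a linear functional on ℝ¹³⁵) if and only if the quantity (αⁱ/βⁱ) Iᵢ(x) is the same for all i = 1,…,27 and the quantity (αⁱ/γⁱ) Pᵢ(x) is the same for all i = 1,…,27. -/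

import Mathlib

/- The product economy ℝ¹³⁵ = (ℝ⁵)²⁷ is modeled as `Fin 27 → Fin 5 → ℝ`;
   within each factor, index 0 = G, 1 = I, 2 = E, 3 = P, 4 = Q. -/

/-- Gibbs–Pfaff covector of the `i`-th economy at the point `x`:
`ωᵢ = dGᵢ − Iᵢ(x) dEᵢ + Pᵢ(x) dQᵢ`, a linear functional on ℝ¹³⁵. -/
noncomputable def ω (x : Fin 27 → Fin 5 → ℝ) (i : Fin 27) :
    (Fin 27 → Fin 5 → ℝ) → ℝ :=
  fun v => v i 0 - x i 1 * v i 2 + x i 3 * v i 4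

/-!
Writing the Lagrange form in the coordinates `(G, I, E, P, Q)` of each factor, it vanishes
iff all its coefficients do. The `dGᵢ`-coefficient forces `λⁱ = -αⁱ`; substituting this,
the `dEᵢ`- and `dQᵢ`-coefficients vanish iff `(αⁱ/βⁱ) Iᵢ = -λ²⁸` and `(αⁱ/γⁱ) Pᵢ = λ²⁹`
for every `i`, so the two multipliers exist exactly when these quantities are independent of `i`.
-/

open Finset

theorem sum_sum_mul_eq_zero_iff {ι κ : Type*} [Fintype ι] [Fintype κ] (c : ι → κ → ℝ) :
    (∀ v : ι → κ → ℝ, ∑ i, ∑ k, c i k * v i k = 0) ↔ c = 0 := by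
  refine ⟨fun h => ?_, fun h v => by simp [h]⟩
  have hsq : ∑ i, ∑ k, c i k ^ 2 = 0 := by simpa only [sq] using h c
  rw [sum_eq_zero_iff_of_nonneg fun i _ => sum_nonneg fun k _ => sq_nonneg _] at hsq
  ext i k
  have hi := hsq i (mem_univ i)
  rw [sum_eq_zero_iff_of_nonneg fun k _ => sq_nonneg _] at hi
  exact pow_eq_zero_iff two_ne_zero |>.mp (hi k (mem_univ k))

def lagrangeCoeff (α β γ lam : Fin 27 → ℝ) (lam28 lam29 : ℝ) (x : Fin 27 → Fin 5 → ℝ)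
    (i : Fin 27) : Fin 5 → ℝ :=
  ![α i + lam i, 0, lam28 * β i - lam i * x i 1, 0, lam i * x i 3 + lam29 * γ i]

theorem lagrange_form_eq_sum_lagrangeCoeff (α β γ lam : Fin 27 → ℝ) (lam28 lam29 : ℝ)
    (x v : Fin 27 → Fin 5 → ℝ) :
    (∑ i, α i * v i 0) + (∑ i, lam i * ω x i v)
        + lam28 * (∑ i, β i * v i 2) + lam29 * (∑ i, γ i * v i 4) =
      ∑ i, ∑ k, lagrangeCoeff α β γ lam lam28 lam29 x i k * v i k := by
  simp only [mul_sum, ← sum_add_distrib]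
  refine sum_congr rfl fun i _ => ?_
  simp only [ω, lagrangeCoeff, Fin.sum_univ_five, Matrix.cons_val_zero, Matrix.cons_val_one,
    Matrix.cons_val, zero_mul, add_zero]
  ring

theorem lagrangeCoeff_eq_zero_iff {α β γ lam : Fin 27 → ℝ} {lam28 lam29 : ℝ}
    {x : Fin 27 → Fin 5 → ℝ} {i : Fin 27} (hβ : β i ≠ 0) (hγ : γ i ≠ 0) :
    lagrangeCoeff α β γ lam lam28 lam29 x i = 0 ↔
      lam i = -α i ∧ α i / β i * x i 1 = -lam28 ∧ α i / γ i * x i 3 = lam29 := by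
  simp only [lagrangeCoeff, funext_iff, Fin.forall_fin_succ, Pi.zero_apply, Matrix.cons_val_zero,
    Matrix.cons_val_succ, Matrix.cons_val_fin_one, forall_const, true_and]
  rw [← neg_eq_iff_add_eq_zero, eq_comm]
  refine and_congr_right fun hlam => ?_
  rw [hlam, div_mul_eq_mul_div, div_eq_iff hβ, div_mul_eq_mul_div, div_eq_iff hγ]
  exact and_congr (by constructor <;> intro <;> linarith) (by constructor <;> intro <;> linarith)

theorem eu_adjusted_balance_general (α β γ : Fin 27 → ℝ)
    (hβ0 : ∀ i, β i ≠ 0) (hγ0 : ∀ i, γ i ≠ 0)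
    (x : Fin 27 → Fin 5 → ℝ) :
    (∃ (lam : Fin 27 → ℝ) (lam28 lam29 : ℝ), ∀ v : Fin 27 → Fin 5 → ℝ,
        (∑ i, α i * v i 0) + (∑ i, lam i * ω x i v)
          + lam28 * (∑ i, β i * v i 2) + lam29 * (∑ i, γ i * v i 4) = 0) ↔
    ((∀ i j : Fin 27, α i / β i * x i 1 = α j / β j * x j 1) ∧
      (∀ i j : Fin 27, α i / γ i * x i 3 = α j / γ j * x j 3)) := by
  simp only [lagrange_form_eq_sum_lagrangeCoeff, sum_sum_mul_eq_zero_iff,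
    funext_iff (f := lagrangeCoeff _ _ _ _ _ _ _), Pi.zero_apply, lagrangeCoeff_eq_zero_iff (hβ0 _) (hγ0 _)]
  constructor
  · rintro ⟨lam, lam28, lam29, h⟩
    exact ⟨fun i j => (h i).2.1.trans (h j).2.1.symm, fun i j => (h i).2.2.trans (h j).2.2.symm⟩
  · rintro ⟨hI, hP⟩
    exact ⟨-α, -(α 0 / β 0 * x 0 1), α 0 / γ 0 * x 0 3,
      fun i => ⟨rfl, by rw [neg_neg, hI i 0], hP i 0⟩⟩

/-- Adjusted balance: given weights `α, β, γ : Fin 27 → ℝ` summing to `1`, with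
`βⁱ ≠ 0` and `γⁱ ≠ 0` for all `i`, for every `x ∈ ℝ¹³⁵` there exist multipliers
`λ¹, …, λ²⁷, λ²⁸, λ²⁹` making the Lagrange 1-form
`Σᵢ αⁱ dGᵢ + Σᵢ λⁱ ωᵢ + λ²⁸ Σᵢ βⁱ dEᵢ + λ²⁹ Σᵢ γⁱ dQᵢ` vanish at `x` if and
only if `(αⁱ/βⁱ) Iᵢ(x)` is the same for all `i` and `(αⁱ/γⁱ) Pᵢ(x)` is the
same for all `i`. -/
theorem eu_adjusted_balance (α β γ : Fin 27 → ℝ)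
    (hα : ∑ i, α i = 1) (hβ : ∑ i, β i = 1) (hγ : ∑ i, γ i = 1)
    (hβ0 : ∀ i, β i ≠ 0) (hγ0 : ∀ i, γ i ≠ 0)
    (x : Fin 27 → Fin 5 → ℝ) :
    (∃ (lam : Fin 27 → ℝ) (lam28 lam29 : ℝ), ∀ v : Fin 27 → Fin 5 → ℝ,
        (∑ i, α i * v i 0) + (∑ i, lam i * ω x i v)
          + lam28 * (∑ i, β i * v i 2) + lam29 * (∑ i, γ i * v i 4) = 0) ↔
    ((∀ i j : Fin 27, α i / β i * x i 1 = α j / β j * x j 1) ∧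
      (∀ i j : Fin 27, α i / γ i * x i 3 = α j / γ j * x j 3)) :=
  eu_adjusted_balance_general α β γ hβ0 hγ0 x
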